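/- arXiv:2605.11020 — 6 statements merged into one kernel-verified Lean document; each statement's English description precedes it below -/
import Mathlib

section
/- Let S be a nonempty finite type, ψ : S → ℝ^d a feature map, and φ₁, φ₂ ∈ ℝ^d with associated Boltzmann probability mass functions p₁ = p_{φ₁} and p₂ = p_{φ₂}. Then the Euclidean inner product of φ₁ − φ₂ with the difference of expected features satisfies ⟨φ₁ − φ₂, Σ_{x∈S} p₁(x)·ψ(x) − Σ_{x∈S} p₂(x)·ψ(x)⟩ = KL(p₁‖p₂) + KL(p₂‖p₁). -/
open Real Finset

/-- Boltzmann probability mass function with parameter `φ` and features `ψ`. -/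
noncomputable def boltz {S : Type*} [Fintype S] {d : ℕ}
    (ψ : S → Fin d → ℝ) (φ : Fin d → ℝ) (x : S) : ℝ :=
  Real.exp (∑ i, φ i * ψ x i) / ∑ y, Real.exp (∑ i, φ i * ψ y i)

/-- Kullback–Leibler divergence between pmfs on a finite type. -/
noncomputable def klDiv {S : Type*} [Fintype S] (p q : S → ℝ) : ℝ :=
  ∑ x, p x * Real.log (p x / q x)

lemma Z_pos {S : Type*} [Fintype S] [Nonempty S] {d : ℕ}
    (ψ : S → Fin d → ℝ) (φ : Fin d → ℝ) :
    0 < ∑ y, Real.exp (∑ i, φ i * ψ y i) :=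
  Finset.sum_pos (fun y _ => Real.exp_pos _) Finset.univ_nonempty

lemma boltz_sum_one {S : Type*} [Fintype S] [Nonempty S] {d : ℕ}
    (ψ : S → Fin d → ℝ) (φ : Fin d → ℝ) :
    ∑ x, boltz ψ φ x = 1 := by
  unfold boltz
  rw [← Finset.sum_div, div_self (Z_pos ψ φ).ne']

lemma log_ratio {S : Type*} [Fintype S] [Nonempty S] {d : ℕ}
    (ψ : S → Fin d → ℝ) (φ₁ φ₂ : Fin d → ℝ) (x : S) :
    Real.log (boltz ψ φ₁ x / boltz ψ φ₂ x)
      = (∑ i, (φ₁ i - φ₂ i) * ψ x i)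
        - (Real.log (∑ y, Real.exp (∑ i, φ₁ i * ψ y i))
          - Real.log (∑ y, Real.exp (∑ i, φ₂ i * ψ y i))) := by
  have h1 := Z_pos ψ φ₁
  have h2 := Z_pos ψ φ₂
  unfold boltz
  rw [Real.log_div (by positivity) (by positivity),
    Real.log_div (Real.exp_pos _).ne' h1.ne',
    Real.log_div (Real.exp_pos _).ne' h2.ne',
    Real.log_exp, Real.log_exp]
  simp only [sub_mul, Finset.sum_sub_distrib]
  ring

/-- The inner product of the parameter difference with the difference of expected
features equals the symmetrized KL divergence of the Boltzmann distributions. -/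
theorem inner_param_diff_eq_sym_kl
    {S : Type*} [Fintype S] [Nonempty S] {d : ℕ}
    (ψ : S → Fin d → ℝ) (φ₁ φ₂ : Fin d → ℝ) :
    ∑ i, (φ₁ i - φ₂ i) *
        ((∑ x, boltz ψ φ₁ x * ψ x i) - ∑ x, boltz ψ φ₂ x * ψ x i) =
      klDiv (boltz ψ φ₁) (boltz ψ φ₂) + klDiv (boltz ψ φ₂) (boltz ψ φ₁) := by
  set p := boltz ψ φ₁
  set q := boltz ψ φ₂
  have hp : ∑ x, p x = 1 := boltz_sum_one ψ φ₁
  have hq : ∑ x, q x = 1 := boltz_sum_one ψ φ₂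
  set C : ℝ := Real.log (∑ y, Real.exp (∑ i, φ₁ i * ψ y i))
    - Real.log (∑ y, Real.exp (∑ i, φ₂ i * ψ y i)) with hC
  have hlog : ∀ x, Real.log (p x / q x) = (∑ i, (φ₁ i - φ₂ i) * ψ x i) - C :=
    fun x => log_ratio ψ φ₁ φ₂ x
  have hlog' : ∀ x, Real.log (q x / p x) = -((∑ i, (φ₁ i - φ₂ i) * ψ x i) - C) := by
    intro x
    have hpx : p x ≠ 0 := by
      have := Z_pos ψ φ₁
      unfold p
      unfold boltz
      positivity
    have hqx : q x ≠ 0 := by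
      have := Z_pos ψ φ₂
      unfold q
      unfold boltz
      positivity
    rw [← hlog x, ← Real.log_inv, inv_div]
  unfold klDiv
  have : ∑ x, p x * Real.log (p x / q x) + ∑ x, q x * Real.log (q x / p x)
      = ∑ x, (p x - q x) * ((∑ i, (φ₁ i - φ₂ i) * ψ x i) - C) := by
    rw [← Finset.sum_add_distrib]
    apply Finset.sum_congr rfl
    intro x _
    rw [hlog x, hlog' x]
    ring
  rw [this]
  have hsub : ∑ x, (p x - q x) * ((∑ i, (φ₁ i - φ₂ i) * ψ x i) - C)
      = ∑ x, (p x - q x) * (∑ i, (φ₁ i - φ₂ i) * ψ x i)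
        - (∑ x, (p x - q x)) * C := by
    rw [Finset.sum_mul, ← Finset.sum_sub_distrib]
    apply Finset.sum_congr rfl
    intro x _
    ring
  rw [hsub, Finset.sum_sub_distrib, hp, hq, sub_self, zero_mul, sub_zero]
  have L : ∑ i, (φ₁ i - φ₂ i) * ((∑ x, p x * ψ x i) - ∑ x, q x * ψ x i)
      = ∑ i, ∑ x, (φ₁ i - φ₂ i) * ((p x - q x) * ψ x i) := by
    apply Finset.sum_congr rfl
    intro i _
    rw [← Finset.sum_sub_distrib, Finset.mul_sum]
    apply Finset.sum_congr rfl
    intro x _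
    ring
  rw [L, Finset.sum_comm]
  apply Finset.sum_congr rfl
  intro x _
  rw [Finset.mul_sum]
  apply Finset.sum_congr rfl
  intro i _
  ring
end

section
/- Let A be a nonempty finite type, let r : A → ℝ, let π₀ be a positive probability mass function on A, and let η ≥ 0. Define π⋆(a) = π₀(a)^{η/(1+η)} · exp(r(a)/(1+η)) / Z, where Z = Σ_{a∈A} π₀(a)^{η/(1+η)} · exp(r(a)/(1+η)). Then π⋆ is a pmf on A and for every pmf π on A, H(π) + Σ_{a∈A} π(a)·r(a) − η·Σ_{a∈A} π(a)·log(π(a)/π₀(a)) ≤ H(π⋆) + Σ_{a∈A} π⋆(a)·r(a) − η·Σ_{a∈A} π⋆(a)·log(π⋆(a)/π₀(a)); that is, the geometric interpolation of π₀ and the softmax of r maximizes the trust-region-penalized maximum-entropy objective. -/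
open Real Finset

/-- The geometric interpolation of `π₀` and the softmax of `r` is a pmf and
maximizes the trust-region-penalized maximum-entropy objective. -/
theorem geometric_interpolation_maximizes
    {A : Type*} [Fintype A] [Nonempty A]
    (r : A → ℝ) (π₀ : A → ℝ)
    (hπ₀pos : ∀ a, 0 < π₀ a) (hπ₀sum : ∑ a, π₀ a = 1)
    (η : ℝ) (hη : 0 ≤ η)
    (Z : ℝ) (hZ : Z = ∑ a, π₀ a ^ (η / (1 + η)) * Real.exp (r a / (1 + η)))
    (πst : A → ℝ)
    (hπst : ∀ a, πst a = π₀ a ^ (η / (1 + η)) * Real.exp (r a / (1 + η)) / Z) :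
    ((∀ a, 0 ≤ πst a) ∧ ∑ a, πst a = 1) ∧
    ∀ pi : A → ℝ, (∀ a, 0 ≤ pi a) → (∑ a, pi a = 1) →
      (-∑ a, pi a * Real.log (pi a)) + (∑ a, pi a * r a)
          - η * ∑ a, pi a * Real.log (pi a / π₀ a) ≤
        (-∑ a, πst a * Real.log (πst a)) + (∑ a, πst a * r a)
          - η * ∑ a, πst a * Real.log (πst a / π₀ a) := by
  have h1η : (0:ℝ) < 1 + η := by linarith
  have hterm : ∀ a, 0 < π₀ a ^ (η / (1 + η)) * Real.exp (r a / (1 + η)) :=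
    fun a => mul_pos (Real.rpow_pos_of_pos (hπ₀pos a) _) (Real.exp_pos _)
  have hZpos : 0 < Z := by
    rw [hZ]
    exact Finset.sum_pos (fun a _ => hterm a) Finset.univ_nonempty
  have hstpos : ∀ a, 0 < πst a := fun a => by
    rw [hπst]; exact div_pos (hterm a) hZpos
  have hstsum : ∑ a, πst a = 1 := by
    simp_rw [hπst]
    rw [← Finset.sum_div, ← hZ, div_self hZpos.ne']
  have hlogst : ∀ a, Real.log (πst a)
      = (η / (1 + η)) * Real.log (π₀ a) + r a / (1 + η) - Real.log Z := by
    intro a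
    rw [hπst, Real.log_div (hterm a).ne' hZpos.ne',
      Real.log_mul (Real.rpow_pos_of_pos (hπ₀pos a) _).ne' (Real.exp_pos _).ne',
      Real.log_rpow (hπ₀pos a), Real.log_exp]
  -- key identity for any pmf
  have hF : ∀ pi : A → ℝ, (∀ a, 0 ≤ pi a) → (∑ a, pi a = 1) →
      (-∑ a, pi a * Real.log (pi a)) + (∑ a, pi a * r a)
          - η * ∑ a, pi a * Real.log (pi a / π₀ a)
        = (1 + η) * (∑ a, pi a * (Real.log (πst a) - Real.log (pi a)))
          + (1 + η) * Real.log Z := by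
    intro pi hpi hsum1
    have hpt : ∀ a, pi a * r a - pi a * Real.log (pi a)
        - η * (pi a * Real.log (pi a / π₀ a))
        = (1 + η) * (pi a * (Real.log (πst a) - Real.log (pi a)))
          + (1 + η) * (pi a * Real.log Z) := by
      intro a
      rcases eq_or_lt_of_le (hpi a) with h0 | hp
      · simp [← h0]
      · rw [Real.log_div hp.ne' (hπ₀pos a).ne', hlogst a]
        field_simp
        ring
    have hs : ∑ a, (pi a * r a - pi a * Real.log (pi a)
        - η * (pi a * Real.log (pi a / π₀ a)))
        = ∑ a, ((1 + η) * (pi a * (Real.log (πst a) - Real.log (pi a)))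
          + (1 + η) * (pi a * Real.log Z)) :=
      Finset.sum_congr rfl (fun a _ => hpt a)
    have h1 : ∑ a, (pi a * r a - pi a * Real.log (pi a)
        - η * (pi a * Real.log (pi a / π₀ a)))
        = (∑ a, pi a * r a) - (∑ a, pi a * Real.log (pi a))
          - η * ∑ a, pi a * Real.log (pi a / π₀ a) := by
      rw [Finset.sum_sub_distrib, Finset.sum_sub_distrib, ← Finset.mul_sum]
    have h2 : ∑ a, ((1 + η) * (pi a * (Real.log (πst a) - Real.log (pi a)))
          + (1 + η) * (pi a * Real.log Z))
        = (1 + η) * (∑ a, pi a * (Real.log (πst a) - Real.log (pi a)))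
          + (1 + η) * Real.log Z := by
      rw [Finset.sum_add_distrib, ← Finset.mul_sum, ← Finset.mul_sum,
        ← Finset.sum_mul, hsum1, one_mul]
    rw [h1, h2] at hs
    linarith
  refine ⟨⟨fun a => (hstpos a).le, hstsum⟩, fun pi hpi hsum1 => ?_⟩
  -- Gibbs inequality
  have gibbs : ∑ a, pi a * (Real.log (πst a) - Real.log (pi a)) ≤ 0 := by
    have hle : ∀ a ∈ Finset.univ, pi a * (Real.log (πst a) - Real.log (pi a))
        ≤ πst a - pi a := by
      intro a _
      rcases eq_or_lt_of_le (hpi a) with h0 | hp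
      · simp [← h0]; exact (hstpos a).le
      · have h := Real.log_le_sub_one_of_pos (div_pos (hstpos a) hp)
        rw [Real.log_div (hstpos a).ne' hp.ne'] at h
        have h2 := mul_le_mul_of_nonneg_left h hp.le
        calc pi a * (Real.log (πst a) - Real.log (pi a))
            ≤ pi a * (πst a / pi a - 1) := h2
          _ = πst a - pi a := by field_simp
    calc ∑ a, pi a * (Real.log (πst a) - Real.log (pi a))
        ≤ ∑ a, (πst a - pi a) := Finset.sum_le_sum hle
      _ = 0 := by rw [Finset.sum_sub_distrib, hstsum, hsum1]; ring
  have hself : ∑ a, πst a * (Real.log (πst a) - Real.log (πst a)) = 0 := by simp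
  rw [hF pi hpi hsum1, hF πst (fun a => (hstpos a).le) hstsum, hself, mul_zero,
    zero_add]
  nlinarith [gibbs]
end

section
/- Let S and A be finite types, let P : S → A → S → ℝ, V : S → ℝ, and Q, r, D : S → A → ℝ, and let γ, β, ε, η ∈ ℝ with η ≠ −1. Assume the soft Bellman relation Q(s,a) = r(s,a) + γ·Σ_{s'∈S} P(s,a,s')·V(s') holds for all s, a. Define the potential Φ(s) = (η/(1+η))·V(s). Then for all s ∈ S and a ∈ A: (1/(1+η))·( (1−ε)·r(s,a) + ε·β·D(s,a) ) + (η/(1+η))·( Q(s,a) − V(s) ) = (1 − ε/(1+η))·r(s,a) + (ε/(1+η))·β·D(s,a) + γ·Σ_{s'∈S} P(s,a,s')·Φ(s') − Φ(s); that is, the Lemma-1 shifted reward built from the intermediate reward (1−ε)·r + ε·β·D and the log-policy term Q − V equals the corrected reward (1 − ε_tr)·r + ε_tr·β·D with smaller step size ε_tr = ε/(1+η), up to a potential-based shaping term with potential Φ. -/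
open Real Finset

/-- The Lemma-1 shifted reward built from the intermediate reward
`(1−ε)·r + ε·β·D` and the log-policy term `Q − V` equals the corrected reward
`(1 − ε_tr)·r + ε_tr·β·D` with `ε_tr = ε/(1+η)`, up to potential-based shaping
with potential `Φ(s) = (η/(1+η))·V(s)`. -/
theorem shifted_reward_eq_corrected_reward_shaped
    {S A : Type*} [Fintype S] [Fintype A]
    (P : S → A → S → ℝ) (V : S → ℝ) (Q r D : S → A → ℝ)
    (γ β ε η : ℝ) (hη : η ≠ -1)
    (hBellman : ∀ s a, Q s a = r s a + γ * ∑ s', P s a s' * V s')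
    (Φ : S → ℝ) (hΦ : ∀ s, Φ s = (η / (1 + η)) * V s) :
    ∀ (s : S) (a : A),
      (1 / (1 + η)) * ((1 - ε) * r s a + ε * β * D s a)
          + (η / (1 + η)) * (Q s a - V s) =
        (1 - ε / (1 + η)) * r s a + (ε / (1 + η)) * β * D s a
          + γ * (∑ s', P s a s' * Φ s') - Φ s := by
  intro s a
  have h0 : 1 + η ≠ 0 := by intro h; apply hη; linarith
  have hsum : ∑ s', P s a s' * Φ s' = (η / (1 + η)) * ∑ s', P s a s' * V s' := by
    simp [hΦ, Finset.mul_sum, mul_left_comm]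
  rw [hsum, hBellman, hΦ]
  field_simp
  ring
end

section
/- Let S and A be nonempty finite types. The function F : (S × A → ℝ) → ℝ defined by F(ρ) = −Σ_{(s,a)∈S×A} ρ(s,a)·log( ρ(s,a) / Σ_{a'∈A} ρ(s,a') ) is concave on the convex set {ρ : S × A → ℝ | ρ(s,a) ≥ 0 for all (s,a)}; that is, the expected entropy, viewed as a function of the (unnormalized) occupancy measure ρ, is concave in ρ. -/
open Real Finset

/-- Two-term log-sum inequality (with `a ≤ b`, `c ≤ d` to handle zeros under
Lean's `log 0 = 0` / `x / 0 = 0` conventions). -/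
lemma log_sum_two {a b c d : ℝ} (ha : 0 ≤ a) (hab : a ≤ b) (hc : 0 ≤ c) (hcd : c ≤ d) :
    (a + c) * Real.log ((a + c) / (b + d)) ≤
      a * Real.log (a / b) + c * Real.log (c / d) := by
  rcases eq_or_lt_of_le ha with rfl | ha'
  · simp only [zero_add, zero_mul]
    rcases eq_or_lt_of_le hc with rfl | hc'
    · simp
    · have hd : 0 < d := lt_of_lt_of_le hc' hcd
      have hb : (0:ℝ) ≤ b := hab
      have : c / (b + d) ≤ c / d :=
        div_le_div_of_nonneg_left hc (by linarith) (by linarith)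
      have h2 : Real.log (c / (b + d)) ≤ Real.log (c / d) :=
        Real.log_le_log (by positivity) this
      nlinarith
  · rcases eq_or_lt_of_le hc with rfl | hc'
    · have hb : 0 < b := lt_of_lt_of_le ha' hab
      have hd : (0:ℝ) ≤ d := hcd
      simp only [add_zero, zero_mul]
      have : a / (b + d) ≤ a / b :=
        div_le_div_of_nonneg_left ha (by linarith) (by linarith)
      have h2 : Real.log (a / (b + d)) ≤ Real.log (a / b) :=
        Real.log_le_log (by positivity) this
      nlinarith
    · have hb : 0 < b := lt_of_lt_of_le ha' hab
      have hd : 0 < d := lt_of_lt_of_le hc' hcd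
      have hbd : 0 < b + d := by linarith
      have hac : 0 < a + c := by linarith
      have key : ∀ x y : ℝ, 0 < x → 0 < y →
          x * Real.log ((a + c) / (b + d)) ≤
            x * Real.log (x / y) + ((a + c) / (b + d) * y - x) := by
        intro x y hx hy
        have hz : 0 < (a + c) / (b + d) * y / x := by positivity
        have h1 : Real.log ((a + c) / (b + d) * y / x) ≤
            (a + c) / (b + d) * y / x - 1 := Real.log_le_sub_one_of_pos hz
        have h2 : Real.log ((a + c) / (b + d)) =
            Real.log (x / y) + Real.log ((a + c) / (b + d) * y / x) := by
          rw [← Real.log_mul (by positivity) (by positivity)]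
          congr 1
          field_simp
        rw [h2]
        have hx' : x ≠ 0 := ne_of_gt hx
        have h3 : x * ((a + c) / (b + d) * y / x - 1) = (a + c) / (b + d) * y - x := by
          field_simp
        nlinarith
      have k1 := key a b ha' hb
      have k2 := key c d hc' hd
      have hsum : (a + c) / (b + d) * b - a + ((a + c) / (b + d) * d - c) = 0 := by
        field_simp
        ring
      have : (a + c) * Real.log ((a + c) / (b + d)) =
          a * Real.log ((a + c) / (b + d)) + c * Real.log ((a + c) / (b + d)) := by ring
      linarith

/-- The expected entropy, viewed as a function of the (unnormalized) occupancy
measure `ρ`, is concave on the nonnegative orthant. -/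
theorem expected_entropy_concaveOn
    {S A : Type*} [Fintype S] [Fintype A] [Nonempty S] [Nonempty A] :
    ConcaveOn ℝ {ρ : S × A → ℝ | ∀ p : S × A, 0 ≤ ρ p}
      (fun ρ : S × A → ℝ =>
        -∑ p : S × A, ρ p * Real.log (ρ p / ∑ a' : A, ρ (p.1, a'))) := by
  constructor
  · intro ρ hρ σ hσ t s ht hs hts p
    simp only [Pi.add_apply, Pi.smul_apply, smul_eq_mul]
    have := hρ p; have := hσ p
    positivity
  · intro ρ hρ σ hσ t s ht hs hts
    simp only [Pi.add_apply, Pi.smul_apply, smul_eq_mul]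
    rw [mul_neg, mul_neg, ← neg_add, neg_le_neg_iff, Finset.mul_sum, Finset.mul_sum,
      ← Finset.sum_add_distrib]
    apply Finset.sum_le_sum
    intro p _
    have hmarg : (∑ a' : A, (t * ρ (p.1, a') + s * σ (p.1, a'))) =
        t * (∑ a' : A, ρ (p.1, a')) + s * (∑ a' : A, σ (p.1, a')) := by
      rw [Finset.sum_add_distrib, Finset.mul_sum, Finset.mul_sum]
    rw [hmarg]
    rcases eq_or_lt_of_le ht with rfl | ht'
    · have : s = 1 := by linarith
      subst this; simp
    · rcases eq_or_lt_of_le hs with rfl | hs'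
      · have : t = 1 := by linarith
        subst this; simp
      · have hx := hρ p
        have hu := hσ p
        have hxy : ρ p ≤ ∑ a' : A, ρ (p.1, a') := by
          have := Finset.single_le_sum (f := fun a' => ρ (p.1, a'))
            (fun i _ => hρ (p.1, i)) (Finset.mem_univ p.2)
          simpa using this
        have huv : σ p ≤ ∑ a' : A, σ (p.1, a') := by
          have := Finset.single_le_sum (f := fun a' => σ (p.1, a'))
            (fun i _ => hσ (p.1, i)) (Finset.mem_univ p.2)
          simpa using this
        have key := log_sum_two (a := t * ρ p) (b := t * ∑ a' : A, ρ (p.1, a'))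
          (c := s * σ p) (d := s * ∑ a' : A, σ (p.1, a'))
          (by positivity) (by nlinarith) (by positivity) (by nlinarith)
        rw [mul_div_mul_left _ _ (ne_of_gt ht'), mul_div_mul_left _ _ (ne_of_gt hs')] at key
        calc (t * ρ p + s * σ p) *
            Real.log ((t * ρ p + s * σ p) /
              (t * (∑ a' : A, ρ (p.1, a')) + s * (∑ a' : A, σ (p.1, a')))) ≤
            t * ρ p * Real.log (ρ p / ∑ a' : A, ρ (p.1, a')) +
            s * σ p * Real.log (σ p / ∑ a' : A, σ (p.1, a')) := key
          _ = t * (ρ p * Real.log (ρ p / ∑ a' : A, ρ (p.1, a'))) +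
            s * (σ p * Real.log (σ p / ∑ a' : A, σ (p.1, a'))) := by ring
end

section
/- Let S be a finite type, let ρ_E and ρ be positive probability mass functions on S, let r : S → ℝ, and let β > 0. Define the estimated optimal occupancy ρ̂(x) = ρ_E(x)·exp(−r(x)/β) / Σ_{y∈S} ρ_E(y)·exp(−r(y)/β). Then the function-space reward update direction δ(x) = r(x) − β·log(ρ_E(x)/ρ(x)) satisfies Σ_{x∈S} δ(x)·(ρ(x) − ρ̂(x)) = β·( KL(ρ‖ρ̂) + KL(ρ̂‖ρ) ), and in particular Σ_{x∈S} δ(x)·(ρ(x) − ρ̂(x)) ≥ 0. -/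
open Real Finset

/-- The function-space reward update direction `δ = r − β·log(ρ_E/ρ)` satisfies
`Σ δ·(ρ − ρ̂) = β·(KL(ρ‖ρ̂) + KL(ρ̂‖ρ)) ≥ 0`, where `ρ̂` is the normalized
reweighting of `ρ_E` by `exp(−r/β)`. -/
theorem update_direction_aligns
    {S : Type*} [Fintype S]
    (ρE ρ : S → ℝ) (r : S → ℝ) (β : ℝ) (hβ : 0 < β)
    (hρE_pos : ∀ x, 0 < ρE x) (hρE_sum : ∑ x, ρE x = 1)
    (hρ_pos : ∀ x, 0 < ρ x) (hρ_sum : ∑ x, ρ x = 1)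
    (ρhat : S → ℝ)
    (hρhat : ∀ x, ρhat x =
      ρE x * Real.exp (-(r x) / β) / ∑ y, ρE y * Real.exp (-(r y) / β))
    (δ : S → ℝ) (hδ : ∀ x, δ x = r x - β * Real.log (ρE x / ρ x)) :
    (∑ x, δ x * (ρ x - ρhat x) = β * (klDiv ρ ρhat + klDiv ρhat ρ)) ∧
    0 ≤ ∑ x, δ x * (ρ x - ρhat x) := by
  cases isEmpty_or_nonempty S
  · simp at hρ_sum
  set Z : ℝ := ∑ y, ρE y * Real.exp (-(r y) / β) with hZ
  have hZpos : 0 < Z := Finset.sum_pos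
    (fun y _ => mul_pos (hρE_pos y) (Real.exp_pos _)) Finset.univ_nonempty
  have hρhat_pos : ∀ x, 0 < ρhat x := fun x => by
    rw [hρhat]; exact div_pos (mul_pos (hρE_pos x) (Real.exp_pos _)) hZpos
  have hρhat_sum : ∑ x, ρhat x = 1 := by
    simp only [hρhat, ← Finset.sum_div, ← hZ]
    exact div_self hZpos.ne'
  have key : ∀ x, δ x = β * (Real.log (ρ x) - Real.log (ρhat x)) - β * Real.log Z := by
    intro x
    have hlog : Real.log (ρhat x) =
        Real.log (ρE x) + (-(r x) / β) - Real.log Z := by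
      rw [hρhat, Real.log_div (mul_pos (hρE_pos x) (Real.exp_pos _)).ne' hZpos.ne',
        Real.log_mul (hρE_pos x).ne' (Real.exp_pos _).ne', Real.log_exp]
    rw [hδ, hlog, Real.log_div (hρE_pos x).ne' (hρ_pos x).ne']
    field_simp
    ring
  have hsum : ∑ x, δ x * (ρ x - ρhat x) =
      β * ∑ x, (Real.log (ρ x) - Real.log (ρhat x)) * (ρ x - ρhat x) := by
    have : ∀ x, δ x * (ρ x - ρhat x) =
        β * ((Real.log (ρ x) - Real.log (ρhat x)) * (ρ x - ρhat x))
          - β * Real.log Z * (ρ x - ρhat x) := by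
      intro x; rw [key x]; ring
    rw [Finset.sum_congr rfl (fun x _ => this x), Finset.sum_sub_distrib,
      ← Finset.mul_sum, ← Finset.mul_sum, Finset.sum_sub_distrib, hρ_sum, hρhat_sum]
    ring
  have hkl : klDiv ρ ρhat + klDiv ρhat ρ =
      ∑ x, (Real.log (ρ x) - Real.log (ρhat x)) * (ρ x - ρhat x) := by
    unfold klDiv
    rw [← Finset.sum_add_distrib]
    refine Finset.sum_congr rfl fun x _ => ?_
    rw [Real.log_div (hρ_pos x).ne' (hρhat_pos x).ne',
      Real.log_div (hρhat_pos x).ne' (hρ_pos x).ne']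
    ring
  have hnn : 0 ≤ ∑ x, (Real.log (ρ x) - Real.log (ρhat x)) * (ρ x - ρhat x) := by
    refine Finset.sum_nonneg fun x _ => ?_
    rcases le_total (ρhat x) (ρ x) with h | h
    · exact mul_nonneg (sub_nonneg.2 (Real.log_le_log (hρhat_pos x) h))
        (sub_nonneg.2 h)
    · have h1 := sub_nonpos.2 (Real.log_le_log (hρ_pos x) h)
      have h2 := sub_nonpos.2 h
      nlinarith [mul_nonneg (neg_nonneg.2 h1) (neg_nonneg.2 h2)]
  constructor
  · rw [hsum, hkl]
  · rw [hsum]; exact mul_nonneg hβ.le hnn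
end

section
/- Let S be a nonempty finite type, ψ : S → ℝ^d a feature map, φ_E, φ ∈ ℝ^d with Boltzmann probability mass functions p_E = p_{φ_E} and p = p_φ, let θ ∈ ℝ^d, and let β > 0. Set φ̂ = φ_E − β⁻¹·θ and define the parameter-space update direction δ = θ − β·(φ_E − φ) ∈ ℝ^d. Then ⟨δ, Σ_{x∈S} p(x)·ψ(x) − Σ_{x∈S} p_{φ̂}(x)·ψ(x)⟩ = β·( KL(p‖p_{φ̂}) + KL(p_{φ̂}‖p) ), and in particular this inner product is nonnegative; that is, the reward update direction aligns with the gradient of the dual, whose components are the difference of expected features under p and p_{φ̂}. -/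
open Real Finset

/-- The parameter-space update direction `δ = θ − β·(φ_E − φ)` aligns with the
gradient of the dual: its inner product with the difference of expected features
under `p_φ` and `p_{φ̂}` (with `φ̂ = φ_E − β⁻¹·θ`) equals the symmetrized KL
divergence scaled by `β`, hence is nonnegative. -/
theorem param_update_direction_aligns
    {S : Type*} [Fintype S] [Nonempty S] {d : ℕ}
    (ψ : S → Fin d → ℝ) (φE φ θ : Fin d → ℝ) (β : ℝ) (hβ : 0 < β)
    (φhat : Fin d → ℝ) (hφhat : ∀ i, φhat i = φE i - β⁻¹ * θ i)
    (δ : Fin d → ℝ) (hδ : ∀ i, δ i = θ i - β * (φE i - φ i)) :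
    (∑ i, δ i * ((∑ x, boltz ψ φ x * ψ x i) - ∑ x, boltz ψ φhat x * ψ x i) =
        β * (klDiv (boltz ψ φ) (boltz ψ φhat) + klDiv (boltz ψ φhat) (boltz ψ φ))) ∧
    0 ≤ ∑ i, δ i * ((∑ x, boltz ψ φ x * ψ x i) - ∑ x, boltz ψ φhat x * ψ x i) := by
  classical
  -- positivity of partition functions and pmfs
  have hZpos : ∀ φ' : Fin d → ℝ, 0 < ∑ y, Real.exp (∑ i, φ' i * ψ y i) := fun φ' =>
    Finset.sum_pos (fun y _ => Real.exp_pos _) Finset.univ_nonempty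
  have hbpos : ∀ (φ' : Fin d → ℝ) (x : S), 0 < boltz ψ φ' x := fun φ' x =>
    div_pos (Real.exp_pos _) (hZpos φ')
  have hsum1 : ∀ φ' : Fin d → ℝ, ∑ x, boltz ψ φ' x = 1 := by
    intro φ'
    simp only [boltz]
    rw [← Finset.sum_div, div_self (ne_of_gt (hZpos φ'))]
  set p := boltz ψ φ with hp
  set q := boltz ψ φhat with hq
  -- log ratio formula
  set C : ℝ := Real.log (∑ y, Real.exp (∑ i, φhat i * ψ y i)) -
      Real.log (∑ y, Real.exp (∑ i, φ i * ψ y i)) with hC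
  have hlog : ∀ x : S, Real.log (p x / q x) =
      (∑ i, (φ i - φhat i) * ψ x i) + C := by
    intro x
    rw [Real.log_div (ne_of_gt (hbpos _ x)) (ne_of_gt (hbpos _ x))]
    simp only [hp, hq, boltz]
    rw [Real.log_div (Real.exp_ne_zero _) (ne_of_gt (hZpos φ)),
        Real.log_div (Real.exp_ne_zero _) (ne_of_gt (hZpos φhat)),
        Real.log_exp, Real.log_exp]
    simp only [sub_mul, Finset.sum_sub_distrib, hC]
    ring
  have hlogqp : ∀ x : S, Real.log (q x / p x) = - Real.log (p x / q x) := by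
    intro x
    rw [← Real.log_inv, inv_div]
  -- symmetrized KL as a single sum
  have hsym : klDiv p q + klDiv q p = ∑ x, (p x - q x) * Real.log (p x / q x) := by
    simp only [klDiv, ← Finset.sum_add_distrib]
    refine Finset.sum_congr rfl fun x _ => ?_
    rw [hlogqp x]; ring
  -- main computation
  have hkey : ∑ x, (p x - q x) * Real.log (p x / q x) =
      ∑ i, (φ i - φhat i) * ((∑ x, p x * ψ x i) - ∑ x, q x * ψ x i) := by
    have h0 : ∑ x, (p x - q x) = 0 := by
      rw [Finset.sum_sub_distrib, hsum1, hsum1, sub_self]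
    calc ∑ x, (p x - q x) * Real.log (p x / q x)
        = ∑ x, ((∑ i, (p x - q x) * ((φ i - φhat i) * ψ x i)) + (p x - q x) * C) := by
          refine Finset.sum_congr rfl fun x _ => ?_
          rw [hlog x, ← Finset.mul_sum]; ring
      _ = ∑ x, ∑ i, (p x - q x) * ((φ i - φhat i) * ψ x i) := by
          rw [Finset.sum_add_distrib, ← Finset.sum_mul, h0, zero_mul, add_zero]
      _ = ∑ i, (φ i - φhat i) * ((∑ x, p x * ψ x i) - ∑ x, q x * ψ x i) := by
          rw [Finset.sum_comm]
          refine Finset.sum_congr rfl fun i _ => ?_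
          rw [← Finset.sum_sub_distrib, Finset.mul_sum]
          refine Finset.sum_congr rfl fun x _ => ?_
          ring
  -- δ = β • (φ - φhat)
  have hδ' : ∀ i, δ i = β * (φ i - φhat i) := by
    intro i
    rw [hδ i, hφhat i]
    field_simp
    ring
  have hmain : ∑ i, δ i * ((∑ x, p x * ψ x i) - ∑ x, q x * ψ x i) =
      β * (klDiv p q + klDiv q p) := by
    rw [hsym, hkey, Finset.mul_sum]
    refine Finset.sum_congr rfl fun i _ => ?_
    rw [hδ' i]; ring
  refine ⟨hmain, ?_⟩
  rw [hmain]
  have hnn : 0 ≤ klDiv p q + klDiv q p := by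
    rw [hsym]
    refine Finset.sum_nonneg fun x _ => ?_
    rw [Real.log_div (ne_of_gt (hbpos _ x)) (ne_of_gt (hbpos _ x))]
    rcases le_total (p x) (q x) with h | h
    · nlinarith [Real.log_le_log (hbpos _ x) h]
    · nlinarith [Real.log_le_log (hbpos _ x) h]
  positivity
end
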